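/- arXiv:1607.07011 — 4 statements merged into one kernel-verified Lean document; each statement's English description precedes it below -/
import Mathlib

section
/- Let g ≥ 2 and m > g be integers. Then for every integer d ≥ 2, l_g(d) ≤ (m − g + 1) + ⌊log_m d⌋ · l_g(m) + (μ_m(d) − 1), where μ_m(d) is the number of nonzero digits of d in base m. -/
/-- `IsGAddChain g a r d` says that `a 0 = 1, a 1, …, a r = d` is a `g`-addition chain
for `d`: each term `a i` (for `1 ≤ i ≤ r`) is a sum `a (j 1) + ⋯ + a (j k)` of `k`
earlier terms, where `2 ≤ k ≤ g` and `j 1 ≤ ⋯ ≤ j k ≤ i - 1`. -/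
def IsGAddChain (g : ℕ) (a : ℕ → ℕ) (r : ℕ) (d : ℕ) : Prop :=
  a 0 = 1 ∧ a r = d ∧
  ∀ i, 1 ≤ i → i ≤ r →
    ∃ k, 2 ≤ k ∧ k ≤ g ∧
      ∃ j : Fin k → ℕ, Monotone j ∧ (∀ t, j t ≤ i - 1) ∧
        a i = ∑ t, a (j t)

/-- `gAddChainLength g d` is `l_g(d)`, the length of a shortest `g`-addition chain for `d`. -/
noncomputable def gAddChainLength (g d : ℕ) : ℕ :=
  sInf {r | ∃ a : ℕ → ℕ, IsGAddChain g a r d}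

/-- `nonzeroDigits m d` is `μ_m(d)`, the number of nonzero digits of `d` in base `m`. -/
def nonzeroDigits (m d : ℕ) : ℕ :=
  ((Nat.digits m d).filter (· ≠ 0)).length

/-! The `m`-ary method. A chain starting `1, g, g + 1, …, m - 1` costs `m - g` steps, and
contains every digit `0 < l < m` up to one step: `l` is a sum of `l < g` ones, or a table entry.
Horner's scheme `d = m * (d / m) + d % m` then builds `d` from its leading digit: multiplying the
current value `v` by `m` costs `l_g(m)` steps (a shortest chain for `m`, scaled by `v`), and adding
a nonzero digit `l` costs one step (`l + v` is a sum of at most `g` earlier terms). -/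

/-- `IsGSum g a n v`: `v` is a sum of between `2` and `g` of the terms `a 0, …, a n`, the
shape required of each new term of a `g`-addition chain. -/
def IsGSum (g : ℕ) (a : ℕ → ℕ) (n v : ℕ) : Prop :=
  ∃ k, 2 ≤ k ∧ k ≤ g ∧ ∃ j : Fin k → ℕ, Monotone j ∧ (∀ t, j t ≤ n) ∧ v = ∑ t, a (j t)

namespace IsGSum

variable {g n v : ℕ} {a b : ℕ → ℕ}

theorem mono {n' : ℕ} (h : IsGSum g a n v) (hn : n ≤ n') : IsGSum g a n' v := by
  obtain ⟨k, hk2, hkg, j, hj, hjn, hv⟩ := h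
  exact ⟨k, hk2, hkg, j, hj, fun t => (hjn t).trans hn, hv⟩

theorem congr (h : IsGSum g a n v) (hab : ∀ i ≤ n, a i = b i) : IsGSum g b n v := by
  obtain ⟨k, hk2, hkg, j, hj, hjn, hv⟩ := h
  exact ⟨k, hk2, hkg, j, hj, hjn, hv.trans (Finset.sum_congr rfl fun t _ => hab _ (hjn t))⟩

theorem map (h : IsGSum g b n v) {f : ℕ → ℕ} (hf : Monotone f) (c : ℕ)
    (hab : ∀ i ≤ n, a (f i) = c * b i) : IsGSum g a (f n) (c * v) := by
  obtain ⟨k, hk2, hkg, j, hj, hjn, hv⟩ := h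
  refine ⟨k, hk2, hkg, f ∘ j, hf.comp hj, fun t => hf (hjn t), ?_⟩
  rw [hv, Finset.mul_sum]
  exact (Finset.sum_congr rfl fun t _ => hab _ (hjn t)).symm

end IsGSum

theorem isGSum_mul_add {g n c p q : ℕ} (a : ℕ → ℕ) (hc : 1 ≤ c) (hcg : c + 1 ≤ g)
    (hpq : p ≤ q) (hqn : q ≤ n) : IsGSum g a n (c * a p + a q) := by
  refine ⟨c + 1, by omega, hcg, fun t => if (t : ℕ) < c then p else q, ?_, ?_, ?_⟩
  · intro s t hst
    have : (s : ℕ) ≤ t := hst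
    dsimp only
    split_ifs <;> omega
  · intro t
    dsimp only
    split_ifs <;> omega
  · simp [Fin.sum_univ_castSucc]

namespace IsGAddChain

variable {g r x : ℕ} {a : ℕ → ℕ}

theorem isGSum (h : IsGAddChain g a r x) {i : ℕ} (hi1 : 1 ≤ i) (hir : i ≤ r) :
    IsGSum g a (i - 1) (a i) :=
  h.2.2 i hi1 hir

theorem truncate (h : IsGAddChain g a r x) {p : ℕ} (hp : p ≤ r) : IsGAddChain g a p (a p) :=
  ⟨h.1, rfl, fun i hi1 hip => h.2.2 i hi1 (hip.trans hp)⟩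

theorem snoc (h : IsGAddChain g a r x) {v : ℕ} (hv : IsGSum g a r v) :
    IsGAddChain g (Function.update a (r + 1) v) (r + 1) v := by
  have hagree : ∀ i ≤ r, a i = Function.update a (r + 1) v i :=
    fun i hi => (Function.update_of_ne (by omega) _ _).symm
  refine ⟨(hagree 0 (Nat.zero_le r)).symm.trans h.1,
    Function.update_self .., fun i hi1 hir => ?_⟩
  rcases Nat.lt_or_eq_of_le hir with hir | rfl
  · rw [← hagree i (by omega)]
    exact (h.isGSum hi1 (by omega)).congr fun i' hi' => hagree i' (by omega)
  · rw [Function.update_self]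
    exact hv.congr hagree

theorem append_mul (h : IsGAddChain g a r x) {b : ℕ → ℕ} {s y : ℕ}
    (hb : IsGAddChain g b s y) (hs : 0 < s) {p : ℕ} (hp : p ≤ r) :
    ∃ A : ℕ → ℕ, IsGAddChain g A (r + s) (a p * y) ∧ ∀ i ≤ r, A i = a i := by
  set A : ℕ → ℕ := fun i => if i ≤ r then a i else a p * b (i - r)
  -- `b j` is placed at index `r + j`, except that `b 0 = 1` is represented by `a p`
  set f : ℕ → ℕ := fun j => if j = 0 then p else r + j
  have hf : Monotone f := fun j j' hjj' => by dsimp only [f]; split_ifs <;> omega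
  have hf_pos : ∀ j, 0 < j → f j = r + j := fun j hj => if_neg hj.ne'
  have hAf : ∀ j, A (f j) = a p * b j := by
    intro j
    rcases Nat.eq_zero_or_pos j with rfl | hj
    · simp [A, f, hp, hb.1]
    · simp [A, hf_pos j hj, show ¬r + j ≤ r by omega]
  refine ⟨A, ⟨by simp [A, h.1], by rw [← hf_pos s hs, hAf, hb.2.1], fun i hi1 hir => ?_⟩,
    fun i hi => if_pos hi⟩
  by_cases hi : i ≤ r
  · rw [show A i = a i from if_pos hi]
    exact (h.isGSum hi1 hi).congr fun i' hi' => (if_pos (by omega)).symm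
  · obtain ⟨j, rfl⟩ : ∃ j, i = r + j := ⟨i - r, by omega⟩
    have hbj := (hb.isGSum (i := j) (by omega) (by omega)).map hf (a p) fun i _ => hAf i
    rw [← hf_pos j (by omega), hAf]
    exact hbj.mono (by dsimp only [f]; split_ifs <;> omega)

theorem length_pos (h : IsGAddChain g a r x) (hx : x ≠ 1) : 0 < r :=
  Nat.pos_of_ne_zero fun hr => hx (by rw [← h.2.1, hr, h.1])

end IsGAddChain

theorem gAddChainLength_le {g r x p : ℕ} {a : ℕ → ℕ} (h : IsGAddChain g a r x) (hp : p ≤ r) :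
    gAddChainLength g (a p) ≤ p :=
  Nat.sInf_le ⟨a, h.truncate hp⟩

def baseChain (g i : ℕ) : ℕ :=
  if i = 0 then 1 else g + i - 1

theorem baseChain_zero (g : ℕ) : baseChain g 0 = 1 := rfl

theorem baseChain_sub_add_one {g v : ℕ} (h : g ≤ v) : baseChain g (v - g + 1) = v := by
  simp only [baseChain, Nat.add_one_ne_zero, if_false]
  omega

theorem isGAddChain_baseChain {g : ℕ} (hg : 2 ≤ g) (r : ℕ) :
    IsGAddChain g (baseChain g) r (baseChain g r) := by
  refine ⟨rfl, rfl, fun i hi1 _ => ?_⟩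
  rcases Nat.lt_or_ge i 2 with hi2 | hi2
  · obtain rfl : i = 1 := by omega
    have hone : baseChain g 1 = (g - 1) * baseChain g 0 + baseChain g 0 := by
      simp only [baseChain, one_ne_zero, ↓reduceIte, add_tsub_cancel_right, mul_one]
      omega
    rw [hone]
    exact isGSum_mul_add _ (by omega) (by omega) le_rfl (Nat.zero_le _)
  · have hsucc : baseChain g i = 1 * baseChain g 0 + baseChain g (i - 1) := by
      simp only [baseChain, show i ≠ 0 by omega, show i - 1 ≠ 0 by omega, ↓reduceIte, mul_one]
      omega
    rw [hsucc]
    exact isGSum_mul_add _ le_rfl hg (Nat.zero_le _) le_rfl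

theorem exists_isGAddChain_gAddChainLength {g d : ℕ} (hg : 2 ≤ g) (hgd : g ≤ d) :
    ∃ b, IsGAddChain g b (gAddChainLength g d) d :=
  Nat.sInf_mem (s := {r | ∃ a, IsGAddChain g a r d}) ⟨d - g + 1, baseChain g, by
    simpa [baseChain_sub_add_one hgd] using isGAddChain_baseChain hg (d - g + 1)⟩

theorem isGSum_add_digit {g m q l : ℕ} {a : ℕ → ℕ} (hg : 2 ≤ g)
    (htab : ∀ i ≤ m - g, a i = baseChain g i) (hq : m - g ≤ q) (hl : 0 < l) (hlm : l < m) :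
    IsGSum g a q (l + a q) := by
  rcases Nat.lt_or_ge l g with hlg | hgl
  · have := isGSum_mul_add (g := g) a hl hlg (Nat.zero_le q) le_rfl
    rwa [htab 0 (Nat.zero_le _), baseChain_zero, mul_one] at this
  · have := isGSum_mul_add (g := g) a le_rfl hg (show l - g + 1 ≤ q by omega) le_rfl
    rwa [one_mul, htab _ (by omega), baseChain_sub_add_one hgl] at this

/-- `d` need not be the last term: `d = 1` only occurs as the first term of the table. -/
def OccursInMaryChain (g m d r : ℕ) : Prop :=
  ∃ a p, IsGAddChain g a r (a r) ∧ m - g ≤ r ∧ (∀ i ≤ m - g, a i = baseChain g i) ∧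
    p ≤ r ∧ a p = d

namespace OccursInMaryChain

variable {g m d r : ℕ}

theorem gAddChainLength_le (h : OccursInMaryChain g m d r) : gAddChainLength g d ≤ r := by
  obtain ⟨a, p, ha, -, -, hp, rfl⟩ := h
  exact (_root_.gAddChainLength_le ha hp).trans hp

theorem of_lt (hg : 2 ≤ g) (hd : 0 < d) (hdm : d < m) :
    OccursInMaryChain g m d (m - g + 1) := by
  by_cases hdg : d = 1 ∨ g ≤ d
  · obtain ⟨p, hp, hpd⟩ : ∃ p ≤ m - g, baseChain g p = d := by
      rcases hdg with rfl | hgd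
      · exact ⟨0, Nat.zero_le _, rfl⟩
      · exact ⟨d - g + 1, by omega, baseChain_sub_add_one hgd⟩
    exact ⟨baseChain g, p, isGAddChain_baseChain hg _, by omega, fun _ _ => rfl, by omega, hpd⟩
  · have hv : IsGSum g (baseChain g) (m - g) ((d - 1) * baseChain g 0 + baseChain g 0) :=
      isGSum_mul_add _ (by omega) (by omega) le_rfl (Nat.zero_le _)
    rw [baseChain_zero, mul_one, Nat.sub_add_cancel hd] at hv
    have hA := (isGAddChain_baseChain hg (m - g)).snoc hv
    exact ⟨_, _, hA.truncate le_rfl, by omega,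
      fun i hi => Function.update_of_ne (by omega) _ _, le_rfl, Function.update_self ..⟩

theorem mul_add (hg : 2 ≤ g) {b : ℕ → ℕ} {s : ℕ} (hb : IsGAddChain g b s m) (hs : 0 < s)
    (h : OccursInMaryChain g m d r) {l : ℕ} (hl : l < m) :
    OccursInMaryChain g m (m * d + l) (r + s + if l = 0 then 0 else 1) := by
  obtain ⟨a, p, ha, hr, htab, hp, rfl⟩ := h
  obtain ⟨A, hA, hAa⟩ := ha.append_mul hb hs hp
  have hAtab : ∀ i ≤ m - g, A i = baseChain g i :=
    fun i hi => (hAa i (by omega)).trans (htab i hi)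
  rcases Nat.eq_zero_or_pos l with rfl | hl0
  · refine ⟨A, r + s, hA.truncate le_rfl, by omega, hAtab, le_rfl, ?_⟩
    rw [hA.2.1, mul_comm, add_zero]
  · have hA' := hA.snoc (isGSum_add_digit hg hAtab (by omega) hl0 hl)
    rw [if_neg hl0.ne']
    refine ⟨_, _, hA'.truncate le_rfl, by omega,
      fun i hi => (Function.update_of_ne (by omega) _ _).trans (hAtab i hi), le_rfl, ?_⟩
    rw [Function.update_self, hA.2.1]
    ring

end OccursInMaryChain

theorem nonzeroDigits_pos {m d : ℕ} (hd : d ≠ 0) : 0 < nonzeroDigits m d :=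
  List.length_pos_of_mem <| List.mem_filter.2
    ⟨List.getLast_mem _, by simpa using Nat.getLast_digit_ne_zero m hd⟩

theorem nonzeroDigits_eq_add {m d : ℕ} (hm : 1 < m) (hd : 0 < d) :
    nonzeroDigits m d = nonzeroDigits m (d / m) + if d % m = 0 then 0 else 1 := by
  rw [nonzeroDigits, Nat.digits_def' hm hd, List.filter_cons]
  split_ifs <;> simp_all [nonzeroDigits]

theorem occursInMaryChain {g m s : ℕ} (hg : 2 ≤ g) (hm : g < m) {b : ℕ → ℕ}
    (hb : IsGAddChain g b s m) (hs : 0 < s) {d : ℕ} (hd : 0 < d) :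
    OccursInMaryChain g m d (m - g + Nat.log m d * s + nonzeroDigits m d) := by
  induction d using Nat.strong_induction_on with
  | _ d ih =>
  rcases Nat.lt_or_ge d m with hdm | hmd
  · rw [Nat.log_of_lt hdm, nonzeroDigits_eq_add (by omega) hd, Nat.div_eq_of_lt hdm,
      Nat.mod_eq_of_lt hdm, if_neg hd.ne']
    simpa [nonzeroDigits] using OccursInMaryChain.of_lt hg hd hdm
  · have hq := (ih (d / m) (Nat.div_lt_self hd (by omega)) (Nat.div_pos hmd (by omega))).mul_add
      hg hb hs (Nat.mod_lt d (by omega))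
    rw [Nat.div_add_mod] at hq
    convert hq using 1
    rw [Nat.log_of_one_lt_of_le (by omega) hmd, nonzeroDigits_eq_add (by omega) hd]
    ring

/-- for integers `g ≥ 2`, `m > g` and `d ≥ 2`, the `m`-ary method gives
`l_g(d) ≤ (m - g + 1) + ⌊log_m d⌋ * l_g(m) + (μ_m(d) - 1)`. -/
theorem gAddChainLength_le_mary (g m d : ℕ) (hg : 2 ≤ g) (hm : g < m) (hd : 2 ≤ d) :
    gAddChainLength g d ≤
      (m - g + 1) + Nat.log m d * gAddChainLength g m + (nonzeroDigits m d - 1) := by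
  obtain ⟨b, hb⟩ := exists_isGAddChain_gAddChainLength hg hm.le
  have hs : 0 < gAddChainLength g m := hb.length_pos (by omega)
  have hμ : 0 < nonzeroDigits m d := nonzeroDigits_pos (by omega)
  calc gAddChainLength g d
      ≤ m - g + Nat.log m d * gAddChainLength g m + nonzeroDigits m d :=
        (occursInMaryChain hg hm hb hs (by omega)).gAddChainLength_le
    _ = (m - g + 1) + Nat.log m d * gAddChainLength g m + (nonzeroDigits m d - 1) := by omega
end

section
/- Let g ≥ 2 be an integer. Then l_g(n) ≤ λ_g(n) + (1 + o(1)) · λ_g(n)/λ_g(λ_g(n)) as n → ∞; precisely, for every ε > 0 there exists N such that for all integers n ≥ N, l_g(n) ≤ λ_g(n) + (1 + ε) · λ_g(n)/λ_g(λ_g(n)). -/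
/-!
Window method in base `m = g ^ t`: the chain first lists `1, 2, …, m - 1` (`m - 2` steps) and
then runs through the base-`m` digits of `n` from the top, multiplying the current value by `m`
in `t` steps (each the sum of `g` copies of the previous term) and adding the next digit in one
more step. This gives `l_g(n) ≤ g ^ t + λ + λ / t` with `λ = λ_g(n)`. For
`t = L - 2 λ_g(L) - 1`, where `L = λ_g(λ)`, we get `g ^ t ≤ g λ / L ^ 2 = o(λ / L)` and
`λ / t = (1 + o(1)) λ / L`.
-/

open Filter Set

namespace IsGAddChain

variable {g r d : ℕ} {a : ℕ → ℕ}

theorem gAddChainLength_le (h : IsGAddChain g a r d) : gAddChainLength g d ≤ r :=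
  Nat.sInf_le ⟨a, h⟩

theorem truncate_s8 (h : IsGAddChain g a r d) {i : ℕ} (hi : i ≤ r) : IsGAddChain g a i (a i) :=
  ⟨h.1, rfl, fun l hl hli => h.2.2 l hl (hli.trans hi)⟩

theorem snoc_s8 (h : IsGAddChain g a r d) {k : ℕ} (hk : 2 ≤ k) (hkg : k ≤ g) {j : Fin k → ℕ}
    (hj : Monotone j) (hjr : ∀ s, j s ≤ r) :
    IsGAddChain g (Function.update a (r + 1) (∑ s, a (j s))) (r + 1) (∑ s, a (j s)) := by
  have sum_eq : ∀ {k'} (j' : Fin k' → ℕ), (∀ s, j' s ≤ r) →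
      ∑ s, Function.update a (r + 1) (∑ s, a (j s)) (j' s) = ∑ s, a (j' s) :=
    fun j' hj' => Finset.sum_congr rfl fun s _ => Function.update_of_ne (by grind) _ _
  refine ⟨by simp [h.1], by simp, fun i hi hir => ?_⟩
  rcases (show i ≤ r ∨ i = r + 1 by omega) with hir | rfl
  · obtain ⟨k', hk', hk'g, j', hj', hj'i, hai⟩ := h.2.2 i hi hir
    refine ⟨k', hk', hk'g, j', hj', hj'i, ?_⟩
    rw [Function.update_of_ne (by omega), hai, sum_eq j' fun s => by grind]
  · exact ⟨k, hk, hkg, j, hj, by simpa using hjr, by rw [Function.update_self, sum_eq j hjr]⟩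

end IsGAddChain

def CoveredByGAddChain (g r : ℕ) (S : Set ℕ) : Prop :=
  ∃ a r', r' ≤ r ∧ IsGAddChain g a r' (a r') ∧ S ⊆ a '' Iic r'

namespace CoveredByGAddChain

variable {g r : ℕ} {S : Set ℕ}

theorem gAddChainLength_le (h : CoveredByGAddChain g r S) {d : ℕ} (hd : d ∈ S) :
    gAddChainLength g d ≤ r := by
  obtain ⟨a, r', hr', ha, hS⟩ := h
  obtain ⟨i, hi, rfl⟩ := hS hd
  exact (ha.truncate_s8 hi).gAddChainLength_le.trans (le_trans hi hr')

theorem mono (h : CoveredByGAddChain g r S) {r' : ℕ} {S' : Set ℕ} (hr : r ≤ r')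
    (hS : S' ⊆ S) : CoveredByGAddChain g r' S' :=
  let ⟨a, r₀, hr₀, ha, haS⟩ := h
  ⟨a, r₀, hr₀.trans hr, ha, hS.trans haS⟩

theorem insert_sum_of_isGAddChain {a : ℕ → ℕ} {r₀ : ℕ} (ha : IsGAddChain g a r₀ (a r₀))
    (hr₀ : r₀ ≤ r) (hS : S ⊆ a '' Iic r₀) {k : ℕ} (hk : 2 ≤ k) (hkg : k ≤ g)
    {j : Fin k → ℕ} (hj : Monotone j) (hjr : ∀ s, j s ≤ r₀) :
    CoveredByGAddChain g (r + 1) (insert (∑ s, a (j s)) S) := by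
  refine ⟨Function.update a (r₀ + 1) (∑ s, a (j s)), r₀ + 1, by omega,
    by simpa using ha.snoc_s8 hk hkg hj hjr, ?_⟩
  rintro _ (rfl | hx)
  · exact ⟨r₀ + 1, mem_Iic.mpr le_rfl, by simp⟩
  · obtain ⟨i, hi, rfl⟩ := hS hx
    exact ⟨i, mem_Iic.mpr (le_trans hi (by omega)), Function.update_of_ne (by grind) _ _⟩

theorem add (hg : 2 ≤ g) (h : CoveredByGAddChain g r S) {x y : ℕ} (hx : x ∈ S)
    (hy : y ∈ S) : CoveredByGAddChain g (r + 1) (insert (x + y) S) := by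
  obtain ⟨a, r₀, hr₀, ha, hS⟩ := h
  obtain ⟨p, hp, rfl⟩ := hS hx
  obtain ⟨q, hq, rfl⟩ := hS hy
  have hpq : ∑ s, a (![min p q, max p q] s) = a p + a q := by
    rcases le_total p q with hle | hle <;> simp [hle, add_comm]
  have hmono : Monotone ![min p q, max p q] := by
    refine Fin.monotone_iff_le_succ.mpr fun i => ?_
    fin_cases i; simp
  rw [← hpq]
  exact insert_sum_of_isGAddChain ha hr₀ hS le_rfl hg hmono fun s => by
    fin_cases s <;> simp only [mem_Iic] at hp hq <;> simp [hp, hq]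

theorem mul (hg : 2 ≤ g) (h : CoveredByGAddChain g r S) {x : ℕ} (hx : x ∈ S) :
    CoveredByGAddChain g (r + 1) (insert (g * x) S) := by
  obtain ⟨a, r₀, hr₀, ha, hS⟩ := h
  obtain ⟨p, hp, rfl⟩ := hS hx
  simpa using insert_sum_of_isGAddChain ha hr₀ hS hg le_rfl (j := fun _ => p) monotone_const
    fun _ => hp

theorem pow_mul (hg : 2 ≤ g) (h : CoveredByGAddChain g r S) {x : ℕ} (hx : x ∈ S) (t : ℕ) :
    CoveredByGAddChain g (r + t) (insert (g ^ t * x) S) := by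
  induction t with
  | zero => simpa [insert_eq_of_mem hx] using h
  | succ t ih =>
    refine (ih.mul hg (mem_insert _ _)).mono (by omega) ?_
    rw [pow_succ', mul_assoc]
    exact insert_subset_insert (subset_insert _ _)

theorem Icc_one (hg : 2 ≤ g) (c : ℕ) : CoveredByGAddChain g c (Icc 1 (c + 1)) := by
  induction c with
  | zero =>
    refine ⟨fun _ => 1, 0, le_rfl, ⟨rfl, rfl, fun i hi hi0 => by omega⟩, ?_⟩
    simp
  | succ c ih =>
    refine (ih.add hg (x := c + 1) (y := 1) (by simp) (by simp)).mono le_rfl fun x hx => ?_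
    simp only [mem_Icc, mem_insert_iff] at hx ⊢
    omega

theorem base_pow (hg : 2 ≤ g) {t : ℕ} (ht : 1 ≤ t) {n : ℕ} (hn : n ≠ 0) :
    CoveredByGAddChain g (g ^ t - 2 + Nat.log (g ^ t) n * (t + 1))
      (insert n (Icc 1 (g ^ t - 1))) := by
  set m := g ^ t with hm_def
  have hm : 2 ≤ m := hg.trans (Nat.le_self_pow (by omega) g)
  have hdigits : CoveredByGAddChain g (m - 2) (Icc 1 (m - 1)) := by
    simpa [show m - 2 + 1 = m - 1 by omega] using Icc_one hg (m - 2)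
  induction n using Nat.strong_induction_on with
  | _ n ih =>
  by_cases hnm : n < m
  · exact hdigits.mono (by omega) (insert_subset (by simp; omega) subset_rfl)
  have hq : n / m ≠ 0 := (Nat.div_pos (by omega) (by omega)).ne'
  have hlog : Nat.log m n = Nat.log m (n / m) + 1 := Nat.log_of_one_lt_of_le (by omega) (by omega)
  have hmul := (ih (n / m) (Nat.div_lt_self (by omega) (by omega)) hq).pow_mul hg
    (mem_insert _ _) t
  rw [← hm_def] at hmul
  have hdigits_sub : Icc 1 (m - 1) ⊆ insert (m * (n / m)) (insert (n / m) (Icc 1 (m - 1))) :=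
    (subset_insert _ _).trans (subset_insert _ _)
  have hn : n % m + m * (n / m) = n := Nat.mod_add_div n m
  rcases Nat.eq_zero_or_pos (n % m) with hd | hd
  · exact hmul.mono (by rw [hlog]; grind) (insert_subset (Or.inl (by omega)) hdigits_sub)
  · have hd' : n % m ∈ Icc 1 (m - 1) :=
      ⟨hd, Nat.le_sub_one_of_lt (Nat.mod_lt n (by omega))⟩
    refine (hmul.add hg (hdigits_sub hd') (mem_insert _ _)).mono (by rw [hlog]; grind) ?_
    rw [hn]
    exact insert_subset_insert hdigits_sub

end CoveredByGAddChain

theorem gAddChainLength_le_pow_add_log_add_log_div {g t n : ℕ} (hg : 2 ≤ g) (ht : 1 ≤ t)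
    (hn : n ≠ 0) : gAddChainLength g n ≤ g ^ t + Nat.log g n + Nat.log g n / t := by
  have h := (CoveredByGAddChain.base_pow hg ht hn).gAddChainLength_le (mem_insert n _)
  rw [Nat.log_pow_left, mul_add_one] at h
  have := Nat.div_mul_le_self (Nat.log g n) t
  omega

theorem pow_mul_log_sq_le {g x t : ℕ} (hg : 1 < g) (hx : x ≠ 0)
    (ht : t + 2 * Nat.log g (Nat.log g x) + 1 ≤ Nat.log g x) :
    g ^ t * Nat.log g x ^ 2 ≤ g * x := by
  set L := Nat.log g x
  calc g ^ t * L ^ 2 ≤ g ^ t * (g ^ (Nat.log g L + 1)) ^ 2 := by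
        gcongr; exact (Nat.lt_pow_succ_log_self hg L).le
    _ ≤ g ^ (L + 1) := by
        rw [← pow_mul, ← pow_add]; exact Nat.pow_le_pow_right (by omega) (by omega)
    _ = g * g ^ L := pow_succ' g L
    _ ≤ g * x := Nat.mul_le_mul_left g (Nat.pow_log_le_self g hx)

theorem tendsto_natLog_atTop {g : ℕ} (hg : 1 < g) : Tendsto (Nat.log g) atTop atTop :=
  tendsto_atTop_atTop.mpr fun b =>
    ⟨g ^ b, fun _ hn => (Nat.log_pow hg b).symm.le.trans (Nat.log_mono_right hn)⟩

theorem eventually_two_mul_natLog_add_one_le {g : ℕ} {δ : ℝ} (hδ : 0 < δ) :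
    ∀ᶠ L : ℕ in atTop, (2 * Nat.log g L + 1 : ℝ) ≤ δ * L := by
  have hlog := ((Real.isLittleO_logb_id_atTop (b := g)).comp_tendsto
    tendsto_natCast_atTop_atTop).bound (half_pos (half_pos hδ))
  have hone := (tendsto_natCast_atTop_atTop.const_mul_atTop (half_pos hδ)).eventually_ge_atTop 1
  filter_upwards [hlog, hone] with L hL hone
  have : (Nat.log g L : ℝ) ≤ δ / 2 / 2 * L := by
    simpa using (Real.natLog_le_logb L g).trans ((le_abs_self _).trans hL)
  linarith

-- `ε / (2 + ε)` is what makes `L ≤ (1 + ε / 2) t` for the window size `t = L - 2 λ_g(L) - 1`.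
theorem gAddChainLength_le_of_large_loglog {g n : ℕ} (hg : 2 ≤ g) {ε : ℝ} (hε : 0 < ε)
    (hgL : (g : ℝ) ≤ ε / 2 * Nat.log g (Nat.log g n))
    (hKL : (2 * Nat.log g (Nat.log g (Nat.log g n)) + 1 : ℝ) ≤
      ε / (2 + ε) * Nat.log g (Nat.log g n)) :
    (gAddChainLength g n : ℝ) ≤
      Nat.log g n + (1 + ε) * Nat.log g n / Nat.log g (Nat.log g n) := by
  set l := Nat.log g n
  set L := Nat.log g l
  set K := Nat.log g L
  have hL : (0 : ℝ) < L := pos_of_mul_pos_right ((by positivity : (0 : ℝ) < g).trans_le hgL)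
    (by positivity)
  have hKL' : 2 * K + 1 < L := by
    have : ε / (2 + ε) < 1 := (div_lt_one (by positivity)).mpr (by linarith)
    exact_mod_cast hKL.trans_lt (mul_lt_of_lt_one_left hL this)
  have hl : l ≠ 0 := by rintro h; simp [L, h] at hKL'
  have hn : n ≠ 0 := by rintro rfl; simp [l] at hl
  set t := L - (2 * K + 1)
  have ht : (t : ℝ) = L - (2 * K + 1) := by rw [Nat.cast_sub hKL'.le]; push_cast; ring
  have htpos : (0 : ℝ) < t := Nat.cast_pos.mpr (Nat.sub_pos_of_lt hKL')
  have hLt : (L : ℝ) ≤ (1 + ε / 2) * t := by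
    have : (1 + ε / 2) * (ε / (2 + ε)) = ε / 2 := by field_simp
    rw [ht]; nlinarith
  have hpow : (g : ℝ) ^ t * L ^ 2 ≤ g * l := by
    exact_mod_cast pow_mul_log_sq_le (by omega) hl (show t + 2 * K + 1 ≤ L by omega)
  have hchain : (gAddChainLength g n : ℝ) ≤ g ^ t + l + l / t :=
    calc (gAddChainLength g n : ℝ)
        ≤ ((g ^ t + l + l / t : ℕ) : ℝ) := by
          exact_mod_cast gAddChainLength_le_pow_add_log_add_log_div hg (by omega) hn
      _ ≤ g ^ t + l + l / t := by push_cast; gcongr; exact Nat.cast_div_le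
  have hpow' : (g : ℝ) ^ t ≤ ε / 2 * l / L := by
    rw [le_div_iff₀ hL]
    refine le_of_mul_le_mul_left ?_ hL
    nlinarith [mul_le_mul_of_nonneg_right hgL (Nat.cast_nonneg (α := ℝ) l)]
  have hdiv : (l : ℝ) / t ≤ (1 + ε / 2) * l / L := by
    rw [div_le_div_iff₀ htpos hL]
    nlinarith [mul_le_mul_of_nonneg_left hLt (Nat.cast_nonneg (α := ℝ) l)]
  calc (gAddChainLength g n : ℝ) ≤ g ^ t + l + l / t := hchain
    _ ≤ ε / 2 * l / L + l + (1 + ε / 2) * l / L := by gcongr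
    _ = l + (1 + ε) * l / L := by ring

/-- for an integer `g ≥ 2`,
`l_g(n) ≤ λ_g(n) + (1 + o(1)) * λ_g(n) / λ_g(λ_g(n))`: for every `ε > 0` there is `N`
such that for all `n ≥ N`, `l_g(n) ≤ λ_g(n) + (1 + ε) * λ_g(n) / λ_g(λ_g(n))`. -/
theorem gAddChainLength_asymptotic_upper (g : ℕ) (hg : 2 ≤ g) :
    ∀ ε : ℝ, 0 < ε → ∃ N : ℕ, ∀ n : ℕ, N ≤ n →
      (gAddChainLength g n : ℝ) ≤
        (Nat.log g n : ℝ) +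
          (1 + ε) * (Nat.log g n : ℝ) / (Nat.log g (Nat.log g n) : ℝ) := by
  intro ε hε
  have hloglog : Tendsto (fun n => Nat.log g (Nat.log g n)) atTop atTop :=
    (tendsto_natLog_atTop hg).comp (tendsto_natLog_atTop hg)
  have hlarge : ∀ᶠ L : ℕ in atTop,
      (g : ℝ) ≤ ε / 2 * L ∧ (2 * Nat.log g L + 1 : ℝ) ≤ ε / (2 + ε) * L :=
    ((tendsto_natCast_atTop_atTop.const_mul_atTop (half_pos hε)).eventually_ge_atTop _).and
      (eventually_two_mul_natLog_add_one_le (by positivity))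
  obtain ⟨N, hN⟩ := eventually_atTop.mp (hloglog.eventually hlarge)
  exact ⟨N, fun n hn => gAddChainLength_le_of_large_loglog hg hε (hN n hn).1 (hN n hn).2⟩
end

section
/- Let g ≥ 3 be an integer and let ε > 0. Then there exist a real number α < g and an integer M such that for every integer m ≥ M, the number of strictly increasing g-addition chains 1 = a_0 < a_1 < ... < a_r = n whose final term n satisfies λ_g(n) = m and whose length satisfies r ≤ m + (1−ε)m/(8g · ln(g) · λ_g(m)) is at most α^m. In particular, this count is substantially less than (g−1)g^m, the number of integers n with λ_g(n) = m. -/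
/-- A `g`-addition chain presented as a list `[a 0, a 1, …, a r]`. -/
def IsGAddChainList (g : ℕ) (L : List ℕ) : Prop :=
  L ≠ [] ∧ L.getD 0 0 = 1 ∧
  ∀ i, 1 ≤ i → i < L.length →
    ∃ k, 2 ≤ k ∧ k ≤ g ∧
      ∃ j : Fin k → ℕ, Monotone j ∧ (∀ t, j t ≤ i - 1) ∧
        L.getD i 0 = ∑ t, L.getD (j t) 0

/-!
Record each step `a i = a j₁ + ⋯ + a jₖ` of a chain by the multiset of its summands other than
`a (i - 1)`, zero summands padding the sum to exactly `g` terms; a chain is determined by its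
length and these step codes. With `δ i = log (g a (i - 1) / a i) ≥ 0`, a step whose code has
`q` entries satisfies `q ≤ 2 g (δ i + δ (i - 1))`, and `∑ δ i = r log g - log n ≤ (r - m) log g`.
So a chain of length `r ≤ m + (1 - ε) m / (8 g log g λ_g(m))` has a code of at most
`T ≈ (1 - ε) m / (2 λ_g(m))` pairs of indices below `2 m`, and there are at most
`(3 m) ^ (2 T + 1) = g ^ ((1 - ε + o(1)) m)` such codes.
-/

open Finset Filter

theorem Real.one_le_log_of_three_le {x : ℝ} (hx : 3 ≤ x) : 1 ≤ Real.log x :=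
  (Real.le_log_iff_exp_le (by linarith)).2 (by linarith [Real.exp_one_lt_d9])

theorem mul_sub_le_mul_log_div {g q A b c : ℝ} (hgc : 0 < g * c) (hA : 0 < A)
    (h : A + q * c ≤ g * c + q * b) : q * (c - b) ≤ g * c * Real.log (g * c / A) := by
  have hlog := Real.one_sub_inv_le_log_of_pos (div_pos hgc hA)
  calc q * (c - b) ≤ g * c * (1 - (g * c / A)⁻¹) := by
        rw [inv_div, mul_one_sub, mul_div_cancel₀ _ hgc.ne']
        linarith
    _ ≤ g * c * Real.log (g * c / A) := mul_le_mul_of_nonneg_left hlog hgc.le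

theorem mul_le_two_mul_sub_add_mul_log {g q b c : ℝ} (hg : 1 ≤ Real.log g) (hq : 0 ≤ q)
    (hqg : q ≤ g) (hb : 0 < b) (hbc : b ≤ c) (hcb : c ≤ g * b) :
    q * c ≤ 2 * (q * (c - b)) + 2 * g * c * Real.log (g * b / c) := by
  have hc : 0 < c := hb.trans_le hbc
  rcases le_or_gt (2 * b) c with h2b | h2b
  · have : 0 ≤ Real.log (g * b / c) := Real.log_nonneg ((one_le_div hc).2 hcb)
    nlinarith [mul_nonneg (mul_nonneg (hq.trans hqg) hc.le) this]
  · have hg0 : 0 < g := (hq.trans hqg).lt_of_ne (by rintro rfl; norm_num at hg)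
    have hlog : 2 - c / b ≤ Real.log (g * b / c) := by
      have h1 := Real.one_sub_inv_le_log_of_pos (div_pos hb hc)
      rw [inv_div] at h1
      rw [mul_div_assoc, Real.log_mul hg0.ne' (div_pos hb hc).ne']
      linarith
    have key : 2 * b - c ≤ 2 * c * (2 - c / b) := by
      rw [mul_sub, ← mul_div_assoc, le_sub_iff_add_le, ← le_sub_iff_add_le', div_le_iff₀ hb]
      nlinarith
    nlinarith [mul_le_mul_of_nonneg_left hlog (by positivity : 0 ≤ 2 * g * c),
      mul_le_mul_of_nonneg_right hqg (by linarith : 0 ≤ 2 * b - c)]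

theorem sum_range_succ_le_two_mul {f u : ℕ → ℝ} {C : ℝ} (n : ℕ) (hC : 0 ≤ C)
    (hun : 0 ≤ u n) (h0 : f 0 ≤ C * u 0) (hf : ∀ i < n, f (i + 1) ≤ C * (u (i + 1) + u i)) :
    ∑ i ∈ range (n + 1), f i ≤ 2 * C * ∑ i ∈ range (n + 1), u i := by
  have hstep :
      ∑ i ∈ range n, f (i + 1) ≤ C * (∑ i ∈ range n, u (i + 1) + ∑ i ∈ range n, u i) := by
    rw [← sum_add_distrib, mul_sum]
    exact sum_le_sum fun i hi => hf i (mem_range.1 hi)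
  have h1 := sum_range_succ' u n
  have h2 := sum_range_succ u n
  rw [sum_range_succ']
  nlinarith [mul_nonneg hC hun]

namespace Multiset

theorem sum_map_eq_card_sub_mul_add {α : Type*} [DecidableEq α] (s : Multiset α)
    (f : α → ℕ) (y : α) :
    (s.map f).sum =
      (card s - card (s.filter (· ≠ y))) * f y + ((s.filter (· ≠ y)).map f).sum := by
  have hcard : card s = count y s + card (s.filter (· ≠ y)) := by
    rw [← card_replicate (count y s) y, ← filter_eq', ← card_add, filter_add_not]
  rw [hcard, Nat.add_sub_cancel]
  conv_lhs => rw [← s.filter_add_not (· = y), filter_eq' s y]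
  simp

end Multiset

noncomputable def multisetsOfCardLE {α : Type*} [DecidableEq α] (B : Finset α) (T : ℕ) :
    Finset (Multiset α) :=
  (Fintype.piFinset fun _ : Fin T => B.insertNone).image fun f => (univ.val.map f).filterMap id

theorem card_multisetsOfCardLE_le {α : Type*} [DecidableEq α] (B : Finset α) (T : ℕ) :
    (multisetsOfCardLE B T).card ≤ (B.card + 1) ^ T :=
  card_image_le.trans (by simp)

theorem mem_multisetsOfCardLE {α : Type*} [DecidableEq α] {B : Finset α} {T : ℕ}
    {s : Multiset α} (hs : Multiset.card s ≤ T) (hB : ∀ x ∈ s, x ∈ B) :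
    s ∈ multisetsOfCardLE B T := by
  set l := s.toList.map some ++ List.replicate (T - Multiset.card s) none with hl_def
  have hl : l.length = T := by simp [l]; omega
  have hmem : ∀ y ∈ l, y ∈ B.insertNone := by
    simp only [hl_def, List.mem_append, List.mem_map, Multiset.mem_toList, List.mem_replicate]
    rintro _ (⟨x, hx, rfl⟩ | ⟨-, rfl⟩)
    · simpa using hB x hx
    · simp
  refine mem_image.2
    ⟨fun t => l[t.1], Fintype.mem_piFinset.2 fun t => hmem _ (List.getElem_mem _), ?_⟩
  have : List.ofFn (fun t : Fin T => l[t.1]) = l := List.ext_getElem (by simp [hl]) (by simp)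
  simp [this, l]

/-- `s` lists the summands `a j` of step `i` as `some j`, padded with `none` (a zero summand)
to exactly `g` entries. -/
def IsPaddedStep (g : ℕ) (a : ℕ → ℕ) (i : ℕ) (s : Multiset (Option ℕ)) : Prop :=
  Multiset.card s = g ∧ (∀ j, some j ∈ s → j < i) ∧ a i = (s.map (Option.elim · 0 a)).sum

noncomputable def stepSummands (g : ℕ) (a : ℕ → ℕ) (i : ℕ) : Multiset (Option ℕ) :=
  Classical.epsilon (IsPaddedStep g a i)

noncomputable def stepCode (g : ℕ) (a : ℕ → ℕ) (i : ℕ) : Multiset (Option ℕ) :=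
  (stepSummands g a i).filter (· ≠ some (i - 1))

noncomputable def chainCode (g : ℕ) (a : ℕ → ℕ) (r : ℕ) : Multiset (ℕ × Option ℕ) :=
  (Multiset.range r).bind fun i => (stepCode g a (i + 1)).map (Prod.mk (i + 1))

noncomputable def stepDeficit (g : ℕ) (a : ℕ → ℕ) (i : ℕ) : ℝ :=
  Real.log (g * a (i - 1) / a i)

theorem card_chainCode (g : ℕ) (a : ℕ → ℕ) (r : ℕ) :
    Multiset.card (chainCode g a r) = ∑ i ∈ range r, Multiset.card (stepCode g a (i + 1)) := by
  simp [chainCode, Multiset.card_bind, sum_eq_multiset_sum]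

theorem mem_chainCode {g : ℕ} {a : ℕ → ℕ} {r : ℕ} {p : ℕ × Option ℕ} (hp : p ∈ chainCode g a r) :
    ∃ i < r, p.1 = i + 1 ∧ p.2 ∈ stepCode g a (i + 1) := by
  simp only [chainCode, Multiset.mem_bind, Multiset.mem_range, Multiset.mem_map] at hp
  obtain ⟨i, hi, x, hx, rfl⟩ := hp
  exact ⟨i, hi, rfl, hx⟩

theorem map_snd_filter_chainCode (g : ℕ) (a : ℕ → ℕ) {r i : ℕ} (hi : 1 ≤ i) (hir : i ≤ r) :
    ((chainCode g a r).filter (·.1 = i)).map Prod.snd = stepCode g a i := by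
  have hk : ∀ k, (((stepCode g a (k + 1)).map (Prod.mk (k + 1))).filter (·.1 = i)).map Prod.snd =
      if k = i - 1 then stepCode g a i else 0 := by
    intro k
    split_ifs with hk
    · subst hk
      rw [Nat.sub_add_cancel hi, Multiset.filter_eq_self.2 (by simp), Multiset.map_map]
      simp
    · rw [Multiset.filter_eq_nil.2 (by simp; omega)]
      simp
  rw [chainCode, Multiset.filter_bind, Multiset.map_bind]
  simp only [hk]
  have := sum_ite_eq' (range r) (i - 1) fun _ => stepCode g a i
  rwa [if_pos (mem_range.2 (by omega))] at this

namespace IsGAddChain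

variable {g r d i : ℕ} {a : ℕ → ℕ}

theorem exists_isPaddedStep (h : IsGAddChain g a r d) (hi : 1 ≤ i) (hir : i ≤ r) :
    ∃ s, IsPaddedStep g a i s := by
  obtain ⟨k, -, hkg, j, -, hj, hsum⟩ := h.2.2 i hi hir
  refine ⟨univ.val.map (some ∘ j) + Multiset.replicate (g - k) none, ?_, ?_, ?_⟩
  · simp only [Multiset.card_add, Multiset.card_map, Multiset.card_replicate, card_val, card_univ,
      Fintype.card_fin]
    omega
  · simp only [Multiset.mem_add, Multiset.mem_map, mem_val, mem_univ, true_and, Function.comp_apply,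
      Option.some.injEq, Multiset.mem_replicate]
    rintro _ (⟨t, rfl⟩ | ⟨-, ⟨⟩⟩)
    have := hj t
    omega
  · simp [hsum, Function.comp_def, sum_eq_multiset_sum]

theorem isPaddedStep_stepSummands (h : IsGAddChain g a r d) (hi : 1 ≤ i) (hir : i ≤ r) :
    IsPaddedStep g a i (stepSummands g a i) :=
  Classical.epsilon_spec (h.exists_isPaddedStep hi hir)

theorem card_stepCode_le (h : IsGAddChain g a r d) (hi : 1 ≤ i) (hir : i ≤ r) :
    Multiset.card (stepCode g a i) ≤ g :=
  (Multiset.card_le_card (Multiset.filter_le _ _)).trans_eq (h.isPaddedStep_stepSummands hi hir).1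

theorem lt_of_some_mem_stepCode (h : IsGAddChain g a r d) (hi : 1 ≤ i) (hir : i ≤ r) {j : ℕ}
    (hj : some j ∈ stepCode g a i) : j < i - 1 := by
  obtain ⟨hmem, hne⟩ := Multiset.mem_filter.1 hj
  have := (h.isPaddedStep_stepSummands hi hir).2.1 j hmem
  simp only [ne_eq, Option.some.injEq] at hne
  omega

theorem eq_stepCode (h : IsGAddChain g a r d) (hi : 1 ≤ i) (hir : i ≤ r) :
    a i = (g - Multiset.card (stepCode g a i)) * a (i - 1) +
      ((stepCode g a i).map (Option.elim · 0 a)).sum := by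
  obtain ⟨hcard, -, hsum⟩ := h.isPaddedStep_stepSummands hi hir
  rw [hsum, Multiset.sum_map_eq_card_sub_mul_add _ _ (some (i - 1)), hcard]
  rfl

theorem eq_of_chainCode_eq {a' : ℕ → ℕ} {d' : ℕ} (h : IsGAddChain g a r d)
    (h' : IsGAddChain g a' r d') (hc : chainCode g a r = chainCode g a' r) :
    ∀ i ≤ r, a i = a' i := by
  intro i
  induction i using Nat.strong_induction_on with
  | _ i ih =>
    intro hir
    rcases Nat.eq_zero_or_pos i with rfl | hi
    · rw [h.1, h'.1]
    have hcode : stepCode g a i = stepCode g a' i := by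
      rw [← map_snd_filter_chainCode g a hi hir, hc, map_snd_filter_chainCode g a' hi hir]
    rw [h.eq_stepCode hi hir, h'.eq_stepCode hi hir, hcode, ih (i - 1) (by omega) (by omega)]
    congr 1
    refine congrArg Multiset.sum (Multiset.map_congr rfl fun x hx => ?_)
    cases x with
    | none => rfl
    | some j =>
      have := h'.lt_of_some_mem_stepCode hi hir hx
      exact ih j (by omega) (by omega)

theorem add_card_stepCode_mul_le (h : IsGAddChain g a r d) (hi : 1 ≤ i) (hir : i ≤ r) {b : ℕ}
    (hb : ∀ x ∈ stepCode g a i, x.elim 0 a ≤ b) :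
    a i + Multiset.card (stepCode g a i) * a (i - 1) ≤
      g * a (i - 1) + Multiset.card (stepCode g a i) * b := by
  have hsum : ((stepCode g a i).map (Option.elim · 0 a)).sum ≤
      Multiset.card (stepCode g a i) * b := by
    have := Multiset.sum_le_card_nsmul _ b fun y hy => by
      obtain ⟨x, hx, rfl⟩ := Multiset.mem_map.1 hy
      exact hb x hx
    rwa [Multiset.card_map, smul_eq_mul] at this
  have hsplit : (g - Multiset.card (stepCode g a i)) * a (i - 1) +
      Multiset.card (stepCode g a i) * a (i - 1) = g * a (i - 1) := by
    rw [← add_mul, Nat.sub_add_cancel (h.card_stepCode_le hi hir)]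
  rw [h.eq_stepCode hi hir]
  omega

theorem pos (h : IsGAddChain g a r d) (hmono : MonotoneOn a (Set.Iic r)) (hir : i ≤ r) :
    0 < a i := by
  have := hmono (Set.mem_Iic.2 (Nat.zero_le r)) (Set.mem_Iic.2 hir) (Nat.zero_le i)
  rw [h.1] at this
  omega

theorem elim_le_of_mem_stepCode (h : IsGAddChain g a r d) (hmono : MonotoneOn a (Set.Iic r))
    (hi : 1 ≤ i) (hir : i ≤ r) : ∀ x ∈ stepCode g a i, x.elim 0 a ≤ a (i - 2) := by
  rintro (_ | j) hx
  · exact Nat.zero_le _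
  · have := h.lt_of_some_mem_stepCode hi hir hx
    exact hmono (Set.mem_Iic.2 (by omega)) (Set.mem_Iic.2 (by omega)) (by omega)

theorem le_mul_prev (h : IsGAddChain g a r d) (hmono : MonotoneOn a (Set.Iic r))
    (hi : 1 ≤ i) (hir : i ≤ r) : a i ≤ g * a (i - 1) := by
  have hstep := h.add_card_stepCode_mul_le hi hir (h.elim_le_of_mem_stepCode hmono hi hir)
  have hprev : a (i - 2) ≤ a (i - 1) :=
    hmono (Set.mem_Iic.2 (by omega)) (Set.mem_Iic.2 (by omega)) (by omega)
  nlinarith [Nat.mul_le_mul_left (Multiset.card (stepCode g a i)) hprev]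

theorem le_pow (h : IsGAddChain g a r d) (hmono : MonotoneOn a (Set.Iic r)) :
    ∀ i ≤ r, a i ≤ g ^ i
  | 0, _ => h.1.le
  | i + 1, hir => by
    have := h.le_mul_prev hmono (by omega) hir
    rw [Nat.add_sub_cancel] at this
    rw [pow_succ']
    exact this.trans (Nat.mul_le_mul_left g (h.le_pow hmono i (by omega)))

theorem stepDeficit_nonneg (h : IsGAddChain g a r d) (hmono : MonotoneOn a (Set.Iic r))
    (hi : 1 ≤ i) (hir : i ≤ r) : 0 ≤ stepDeficit g a i :=
  Real.log_nonneg ((one_le_div (by exact_mod_cast h.pos hmono hir)).2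
    (by exact_mod_cast h.le_mul_prev hmono hi hir))

theorem card_stepCode_one_le_stepDeficit (h : IsGAddChain g a r d)
    (hmono : MonotoneOn a (Set.Iic r)) (hg : 0 < g) (hr : 1 ≤ r) :
    (Multiset.card (stepCode g a 1) : ℝ) ≤ g * stepDeficit g a 1 := by
  have hstep := h.add_card_stepCode_mul_le le_rfl hr (b := 0) fun x hx => by
    cases x with
    | none => exact le_rfl
    | some j => exact absurd (h.lt_of_some_mem_stepCode le_rfl hr hx) (Nat.not_lt_zero j)
  rw [Nat.sub_self, h.1] at hstep
  have := mul_sub_le_mul_log_div (g := g) (q := Multiset.card (stepCode g a 1)) (A := a 1)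
    (b := 0) (c := 1) (by simpa using hg) (by exact_mod_cast h.pos hmono hr)
    (by exact_mod_cast hstep)
  simpa [stepDeficit, h.1] using this

/-- The `q` summands other than `a (i - 1)` are at most `a (i - 2)`, so step `i` falls short of
multiplying by `g` unless `q` is small or `a (i - 2)` is close to `a (i - 1)`, and the latter
means that step `i - 1` fell short. -/
theorem card_stepCode_le_stepDeficit (h : IsGAddChain g a r d) (hmono : MonotoneOn a (Set.Iic r))
    (hg : 3 ≤ g) (hi : 2 ≤ i) (hir : i ≤ r) :
    (Multiset.card (stepCode g a i) : ℝ) ≤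
      2 * g * (stepDeficit g a i + stepDeficit g a (i - 1)) := by
  have hc := h.pos hmono (i := i - 1) (by omega)
  have hstep : (a i : ℝ) + Multiset.card (stepCode g a i) * a (i - 1) ≤
      g * a (i - 1) + Multiset.card (stepCode g a i) * a (i - 2) := by
    exact_mod_cast h.add_card_stepCode_mul_le (by omega) hir
      (h.elim_le_of_mem_stepCode hmono (by omega) hir)
  have hprev : a (i - 1) ≤ g * a (i - 2) := by
    simpa [Nat.sub_sub] using h.le_mul_prev hmono (i := i - 1) (by omega) (by omega)
  have h1 := mul_sub_le_mul_log_div (by positivity) (by exact_mod_cast h.pos hmono hir) hstep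
  have h2 := mul_le_two_mul_sub_add_mul_log (g := g) (q := Multiset.card (stepCode g a i))
    (b := a (i - 2)) (c := a (i - 1)) (Real.one_le_log_of_three_le (by exact_mod_cast hg))
    (Nat.cast_nonneg _) (by exact_mod_cast h.card_stepCode_le (by omega) hir)
    (by exact_mod_cast h.pos hmono (i := i - 2) (by omega))
    (by exact_mod_cast hmono (Set.mem_Iic.2 (by omega)) (Set.mem_Iic.2 (by omega)) (by omega))
    (by exact_mod_cast hprev)
  have hδ : stepDeficit g a (i - 1) = Real.log (g * a (i - 2) / a (i - 1)) := by
    simp [stepDeficit, Nat.sub_sub]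
  refine le_of_mul_le_mul_right ?_ (by exact_mod_cast hc : (0 : ℝ) < a (i - 1))
  rw [hδ, stepDeficit]
  nlinarith [h1, h2]

theorem sum_stepDeficit (h : IsGAddChain g a r d) (hmono : MonotoneOn a (Set.Iic r))
    (hg : 0 < g) : ∑ i ∈ range r, stepDeficit g a (i + 1) = r * Real.log g - Real.log d := by
  have hstep : ∀ i ∈ range r, stepDeficit g a (i + 1) =
      Real.log g + (Real.log (a i) - Real.log (a (i + 1))) := by
    intro i hi
    have hi := mem_range.1 hi
    have ha : (a i : ℝ) ≠ 0 := Nat.cast_ne_zero.2 (h.pos hmono hi.le).ne'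
    have ha' : (a (i + 1) : ℝ) ≠ 0 := Nat.cast_ne_zero.2 (h.pos hmono hi).ne'
    have hg' : (g : ℝ) ≠ 0 := Nat.cast_ne_zero.2 hg.ne'
    rw [stepDeficit, Nat.add_sub_cancel, Real.log_div (mul_ne_zero hg' ha) ha',
      Real.log_mul hg' ha]
    ring
  rw [sum_congr rfl hstep, sum_add_distrib, sum_range_sub', sum_const, card_range, nsmul_eq_mul,
    h.1, h.2.1, Nat.cast_one, Real.log_one]
  ring

theorem le_of_pow_le (h : IsGAddChain g a r d) (hmono : MonotoneOn a (Set.Iic r)) (hg : 2 ≤ g)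
    {m : ℕ} (hm : g ^ m ≤ d) : m ≤ r :=
  (Nat.pow_le_pow_iff_right (by omega)).1 (hm.trans (h.2.1 ▸ h.le_pow hmono r le_rfl))

theorem card_chainCode_le (h : IsGAddChain g a r d) (hmono : MonotoneOn a (Set.Iic r))
    (hg : 3 ≤ g) {m : ℕ} (hm : g ^ m ≤ d) :
    (Multiset.card (chainCode g a r) : ℝ) ≤ 4 * g * Real.log g * (r - m) := by
  have hlogd : m * Real.log g ≤ Real.log d := by
    rw [← Real.log_pow]
    exact Real.log_le_log (by positivity) (by exact_mod_cast hm)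
  rw [card_chainCode, Nat.cast_sum]
  obtain _ | n := r
  · simp [Nat.le_zero.1 (h.le_of_pow_le hmono (by omega) hm)]
  calc ∑ i ∈ range (n + 1), (Multiset.card (stepCode g a (i + 1)) : ℝ)
      ≤ 2 * (2 * g) * ∑ i ∈ range (n + 1), stepDeficit g a (i + 1) := by
        refine sum_range_succ_le_two_mul n (by positivity)
          (h.stepDeficit_nonneg hmono (by omega) le_rfl) ?_ fun i hi => ?_
        · have := h.card_stepCode_one_le_stepDeficit hmono (by omega) (by omega)
          have := h.stepDeficit_nonneg hmono le_rfl (by omega : 1 ≤ n + 1)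
          simp only [zero_add]
          nlinarith
        · simpa using h.card_stepCode_le_stepDeficit hmono hg (i := i + 2) (by omega) (by omega)
    _ ≤ 4 * g * Real.log g * ((n + 1 : ℕ) - m) := by
        rw [h.sum_stepDeficit hmono (by omega)]
        nlinarith

end IsGAddChain

theorem IsGAddChainList.isGAddChain {g : ℕ} {L : List ℕ} (h : IsGAddChainList g L) :
    IsGAddChain g (L.getD · 0) (L.length - 1) (L.getLastD 0) := by
  obtain ⟨hne, h0, hstep⟩ := h
  have hlen := List.length_pos_iff.2 hne
  refine ⟨h0, ?_, fun i hi hir => hstep i hi (by omega)⟩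
  rw [List.getLastD_eq_getLast?, List.getLast?_eq_getElem?, ← List.getD_eq_getElem?_getD]

noncomputable def listChainCode (g : ℕ) (L : List ℕ) : Multiset (ℕ × Option ℕ) :=
  chainCode g (L.getD · 0) (L.length - 1)

theorem IsGAddChainList.eq_of_listChainCode_eq {g : ℕ} {L₁ L₂ : List ℕ}
    (h₁ : IsGAddChainList g L₁) (h₂ : IsGAddChainList g L₂) (hlen : L₁.length = L₂.length)
    (hc : listChainCode g L₁ = listChainCode g L₂) : L₁ = L₂ := by
  rw [listChainCode, listChainCode, ← hlen] at hc
  have heq := h₁.isGAddChain.eq_of_chainCode_eq (hlen ▸ h₂.isGAddChain) hc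
  refine List.ext_getElem hlen fun i hi₁ hi₂ => ?_
  simpa [List.getD_eq_getElem, hi₁, hi₂] using heq i (by omega)

theorem ncard_le_of_card_listChainCode_le {g N T : ℕ} {S : Set (List ℕ)}
    (hS : ∀ L ∈ S, IsGAddChainList g L ∧ L.length ≤ N ∧ Multiset.card (listChainCode g L) ≤ T) :
    S.ncard ≤ (N + 1) ^ (2 * T + 1) := by
  set B := range N ×ˢ (range N).insertNone
  have hmaps : ∀ L ∈ S, (L.length, listChainCode g L) ∈
      ((range (N + 1) ×ˢ multisetsOfCardLE B T : Finset _) : Set _) := by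
    intro L hL
    obtain ⟨hch, hlen, hcard⟩ := hS L hL
    refine mem_product.2 ⟨mem_range.2 (by omega), mem_multisetsOfCardLE hcard ?_⟩
    rintro ⟨_, x⟩ hp
    obtain ⟨i, hi, rfl, hx⟩ := mem_chainCode hp
    refine mem_product.2 ⟨mem_range.2 (by omega), ?_⟩
    cases x with
    | none => exact mem_insertNone.2 (by simp)
    | some j =>
      have := hch.isGAddChain.lt_of_some_mem_stepCode (by omega) (by omega) hx
      simpa using (by omega : j < N)
  have hinj : Set.InjOn (fun L => (L.length, listChainCode g L)) S := fun L₁ h₁ L₂ h₂ he =>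
    (hS L₁ h₁).1.eq_of_listChainCode_eq (hS L₂ h₂).1 (congrArg Prod.fst he) (congrArg Prod.snd he)
  calc S.ncard ≤ (range (N + 1) ×ˢ multisetsOfCardLE B T).card := by
        simpa using Set.ncard_le_ncard_of_injOn _ hmaps hinj (finite_toSet _)
    _ ≤ (N + 1) * (B.card + 1) ^ T := by
        rw [card_product, card_range]
        exact Nat.mul_le_mul_left _ (card_multisetsOfCardLE_le B T)
    _ ≤ (N + 1) * ((N + 1) ^ 2) ^ T := by
        gcongr
        simp only [B, card_product, card_range, card_insertNone]
        nlinarith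
    _ = (N + 1) ^ (2 * T + 1) := by rw [← pow_mul, pow_succ']

theorem List.Pairwise.monotoneOn_getD {L : List ℕ} (h : L.Pairwise (· < ·)) :
    MonotoneOn (L.getD · 0) (Set.Iic (L.length - 1)) := by
  intro i hi j hj hij
  rcases hij.eq_or_lt with rfl | hlt
  · exact le_rfl
  have hj' : j < L.length := by simp only [Set.mem_Iic] at hj; omega
  simp only [List.getD_eq_getElem _ _ hj', List.getD_eq_getElem _ _ (hlt.trans hj')]
  exact (List.pairwise_iff_getElem.1 h i j _ hj' hlt).le

theorem IsGAddChainList.length_le_and_card_le {g m : ℕ} {L : List ℕ} {B : ℝ} (hg : 3 ≤ g)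
    (h : IsGAddChainList g L) (hsort : L.Pairwise (· < ·)) (hlog : Nat.log g (L.getLastD 0) = m)
    (hB : 4 * g * Real.log g * (((L.length - 1 : ℕ) : ℝ) - m) ≤ B) :
    L.length ≤ m + ⌊B⌋₊ + 1 ∧ Multiset.card (listChainCode g L) ≤ ⌊B⌋₊ := by
  have hch := h.isGAddChain
  have hmono := hsort.monotoneOn_getD
  have hd : 0 < L.getLastD 0 := hch.2.1 ▸ hch.pos hmono le_rfl
  have hgm : g ^ m ≤ L.getLastD 0 := hlog ▸ Nat.pow_log_le_self g hd.ne'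
  have hmr := hch.le_of_pow_le hmono (by omega) hgm
  refine ⟨?_, Nat.le_floor ((hch.card_chainCode_le hmono hg hgm).trans hB)⟩
  have hlength : L.length - 1 - m ≤ ⌊B⌋₊ := by
    refine Nat.le_floor (le_trans ?_ hB)
    have hg3 : (3 : ℝ) ≤ g := by exact_mod_cast hg
    rw [Nat.cast_sub hmr]
    refine le_mul_of_one_le_left (sub_nonneg.2 (by exact_mod_cast hmr)) ?_
    exact one_le_mul_of_one_le_of_one_le (by linarith) (Real.one_le_log_of_three_le hg3)
  omega

theorem eventually_natLog_add_two_le {g : ℕ} (hg : 3 ≤ g) {c : ℝ} (hc : 0 < c) :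
    ∀ᶠ m : ℕ in atTop, (Nat.log g m : ℝ) + 2 ≤ c * m := by
  have hlog : ∀ᶠ x : ℝ in atTop, Real.log x ≤ c / 2 * x := by
    filter_upwards [Real.isLittleO_log_id_atTop.bound (half_pos hc), eventually_ge_atTop 1]
      with x hx hx1
    rwa [id, Real.norm_of_nonneg (Real.log_nonneg hx1), Real.norm_of_nonneg (by linarith)] at hx
  filter_upwards [tendsto_natCast_atTop_atTop.eventually hlog,
    tendsto_natCast_atTop_atTop.eventually (eventually_ge_atTop (4 / c))] with m hm hm'
  have hlg := Real.one_le_log_of_three_le (by exact_mod_cast hg : (3 : ℝ) ≤ g)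
  have hLm : (Nat.log g m : ℝ) ≤ Real.log m := (Real.natLog_le_logb m g).trans
    (div_le_self (Real.log_natCast_nonneg m) hlg)
  have : 2 ≤ c / 2 * m := by rw [div_le_iff₀ hc] at hm'; linarith
  linarith

theorem eventually_pow_le {g : ℕ} (hg : 3 ≤ g) {η : ℝ} (hη : 0 < η) :
    ∀ᶠ m : ℕ in atTop, ∀ T : ℕ, (T : ℝ) ≤ (1 - η) * m / (2 * Nat.log g m) →
      ((m + T + 2 : ℕ) : ℝ) ^ (2 * T + 1) ≤ ((g : ℝ) ^ (1 - η / 4)) ^ m := by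
  filter_upwards [eventually_atTop.2 ⟨g ^ ⌈4 / η⌉₊, fun m hm => Nat.le_log_of_pow_le (by omega) hm⟩,
    eventually_natLog_add_two_le hg (by positivity : 0 < η / 4), eventually_ge_atTop 2]
    with m hK hL hm2 T hT
  set Lm := Nat.log g m
  have hg3 : (3 : ℝ) ≤ g := by exact_mod_cast hg
  have hlg := Real.one_le_log_of_three_le hg3
  have hm : (2 : ℝ) ≤ m := by exact_mod_cast hm2
  have hηL : 4 ≤ η * Lm := by
    have := (Nat.le_ceil (4 / η)).trans (by exact_mod_cast hK : (⌈4 / η⌉₊ : ℝ) ≤ Lm)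
    rwa [div_le_iff₀ hη, mul_comm] at this
  have hLpos : (0 : ℝ) < Lm := by nlinarith
  have hTL : 2 * Lm * T ≤ (1 - η) * m := by
    rwa [le_div_iff₀ (by positivity), mul_comm] at hT
  have hTm : (T : ℝ) ≤ m / 2 := by nlinarith
  have hlog : Real.log ((m + T + 2 : ℕ) : ℝ) ≤ (Lm + 2) * Real.log g := by
    have hlt : (m : ℝ) < (g : ℝ) ^ (Lm + 1) := by
      exact_mod_cast Nat.lt_pow_succ_log_self (by omega) m
    have hlogm := Real.log_lt_log (by positivity) hlt
    rw [Real.log_pow] at hlogm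
    calc Real.log ((m + T + 2 : ℕ) : ℝ) ≤ Real.log (3 * m) :=
          Real.log_le_log (by positivity) (by push_cast; linarith)
      _ = Real.log 3 + Real.log m := Real.log_mul (by norm_num) (by positivity)
      _ ≤ (Lm + 2) * Real.log g := by
          have := Real.log_le_log (by norm_num) hg3
          push_cast at hlogm
          linarith
  have hexp : (2 * T + 1 : ℝ) * (Lm + 2) ≤ (1 - η / 4) * m := by
    nlinarith [mul_le_mul_of_nonneg_right hηL (Nat.cast_nonneg T : (0 : ℝ) ≤ T)]
  rw [← Real.log_le_log_iff (by positivity) (by positivity), Real.log_pow, Real.log_pow,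
    Real.log_rpow (by positivity)]
  push_cast
  calc (2 * T + 1 : ℝ) * Real.log (m + T + 2) ≤ (2 * T + 1) * ((Lm + 2) * Real.log g) :=
        mul_le_mul_of_nonneg_left (by exact_mod_cast hlog) (by positivity)
    _ ≤ m * ((1 - η / 4) * Real.log g) := by nlinarith

/-- for an integer `g ≥ 3` and `ε > 0`, there are `α < g` and `M` such that
for all `m ≥ M`, the number of strictly increasing `g`-addition chains
`1 = a 0 < a 1 < ⋯ < a r = n` with `λ_g(n) = m` and
`r ≤ m + (1 - ε) m / (8 g ln g · λ_g(m))` is at most `α ^ m`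
(substantially less than `(g - 1) g ^ m`, the number of `n` with `λ_g(n) = m`). -/
theorem count_short_gAddChains (g : ℕ) (hg : 3 ≤ g) (ε : ℝ) (hε : 0 < ε) :
    ∃ α : ℝ, 0 < α ∧ α < g ∧ ∃ M : ℕ, ∀ m : ℕ, M ≤ m →
      (Set.ncard {L : List ℕ |
          IsGAddChainList g L ∧ L.Pairwise (· < ·) ∧
          Nat.log g (L.getLastD 0) = m ∧
          ((L.length - 1 : ℕ) : ℝ) ≤
            (m : ℝ) + (1 - ε) * (m : ℝ) /
              (8 * (g : ℝ) * Real.log g * (Nat.log g m : ℝ))} : ℝ)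
        ≤ α ^ m := by
  set η := min ε 1
  have hη : 0 < η := lt_min hε one_pos
  have hg1 : (1 : ℝ) < g := by exact_mod_cast (by omega : 1 < g)
  refine ⟨(g : ℝ) ^ (1 - η / 4), by positivity, ?_, ?_⟩
  · simpa using Real.rpow_lt_rpow_of_exponent_lt hg1 (by linarith : 1 - η / 4 < 1)
  obtain ⟨M, hM⟩ := eventually_atTop.1 (eventually_pow_le hg hη)
  refine ⟨M, fun m hm => ?_⟩
  have hlg := Real.one_le_log_of_three_le (by exact_mod_cast hg : (3 : ℝ) ≤ g)
  set T := ⌊(1 - η) * m / (2 * Nat.log g m)⌋₊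
  calc _ ≤ ((m + T + 2 : ℕ) : ℝ) ^ (2 * T + 1) := by
        refine mod_cast ncard_le_of_card_listChainCode_le (N := m + T + 1)
          fun L ⟨hch, hsort, hlog, hlen⟩ => ⟨hch, hch.length_le_and_card_le hg hsort hlog ?_⟩
        calc 4 * g * Real.log g * (((L.length - 1 : ℕ) : ℝ) - m)
            ≤ 4 * g * Real.log g * ((1 - ε) * m / (8 * g * Real.log g * Nat.log g m)) :=
              mul_le_mul_of_nonneg_left (by push_cast at hlen; linarith) (by positivity)
          _ = (1 - ε) * m / (2 * Nat.log g m) := by field_simp; ring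
          _ ≤ (1 - η) * m / (2 * Nat.log g m) := by gcongr; exact min_le_left ε 1
    _ ≤ _ := hM m hm T (Nat.floor_le (div_nonneg
          (mul_nonneg (sub_nonneg.2 (min_le_right ε 1)) m.cast_nonneg) (by positivity)))
end

section
/- Let g ≥ 2 be an integer and let k ≥ 0 be an integer. Then l_g(g^k · (g+1)^2) ≤ k + 4; indeed 1, g, g+2, g^2+2g, g^2+2g+1, g(g^2+2g+1), ..., g^k(g^2+2g+1) is a g-addition chain of length k + 4 for g^k(g+1)^2. -/
/-- The condition on a single term `a i` in `IsGAddChain g a r d`. -/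
def IsGSumOfEarlier (g : ℕ) (a : ℕ → ℕ) (i : ℕ) : Prop :=
  ∃ k, 2 ≤ k ∧ k ≤ g ∧
    ∃ j : Fin k → ℕ, Monotone j ∧ (∀ t, j t ≤ i - 1) ∧ a i = ∑ t, a (j t)

theorem gAddChainLength_le_of_isGAddChain {g r d : ℕ} {a : ℕ → ℕ}
    (h : IsGAddChain g a r d) : gAddChainLength g d ≤ r :=
  Nat.sInf_le ⟨a, h⟩

namespace IsGSumOfEarlier

variable {g : ℕ} {a : ℕ → ℕ} {i : ℕ}

theorem of_eq_mul (hg : 2 ≤ g) {j : ℕ} (hj : j < i) (h : a i = g * a j) :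
    IsGSumOfEarlier g a i :=
  ⟨g, hg, le_rfl, fun _ => j, monotone_const, fun _ => Nat.le_sub_one_of_lt hj, by simp [h]⟩

theorem of_eq_add (hg : 2 ≤ g) {j₁ j₂ : ℕ} (hj : j₁ ≤ j₂) (hj₂ : j₂ < i)
    (h : a i = a j₁ + a j₂) : IsGSumOfEarlier g a i := by
  refine ⟨2, le_rfl, hg, ![j₁, j₂], ?_, ?_, by simp [h]⟩
  · intro s t hst
    fin_cases s <;> fin_cases t <;> simp_all
  · intro t
    fin_cases t <;> simp <;> omega

end IsGSumOfEarlier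

def succSqChain (g : ℕ) : ℕ → ℕ
  | 0 => 1
  | 1 => g
  | 2 => g + 1
  | 3 => g * (g + 1)
  | i + 4 => g ^ i * (g + 1) ^ 2

theorem isGSumOfEarlier_succSqChain {g : ℕ} (hg : 2 ≤ g) :
    ∀ i, 1 ≤ i → IsGSumOfEarlier g (succSqChain g) i
  | 0, h => absurd h (by decide)
  | 1, _ => .of_eq_mul hg (j := 0) (by decide) (by simp [succSqChain])
  | 2, _ => .of_eq_add hg (j₁ := 0) (j₂ := 1) (by decide) (by decide)
      (by simp [succSqChain, add_comm])
  | 3, _ => .of_eq_mul hg (j := 2) (by decide) rfl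
  | 4, _ => .of_eq_add hg (j₁ := 2) (j₂ := 3) (by decide) (by decide)
      (by simp only [succSqChain]; ring)
  | n + 5, _ => .of_eq_mul hg (j := n + 4) (by omega)
      (by simp only [succSqChain]; ring)

theorem isGAddChain_succSqChain {g : ℕ} (hg : 2 ≤ g) (k : ℕ) :
    IsGAddChain g (succSqChain g) (k + 4) (g ^ k * (g + 1) ^ 2) :=
  ⟨rfl, rfl, fun i hi _ => isGSumOfEarlier_succSqChain hg i hi⟩

/-- for integers `g ≥ 2` and `k ≥ 0`, `l_g(g ^ k * (g + 1) ^ 2) ≤ k + 4`. -/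
theorem gAddChainLength_pow_mul_succ_sq (g k : ℕ) (hg : 2 ≤ g) :
    gAddChainLength g (g ^ k * (g + 1) ^ 2) ≤ k + 4 :=
  gAddChainLength_le_of_isGAddChain (isGAddChain_succSqChain hg k)
end
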